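/- If μ* is an upper quasi-density on ℕ, then its associated lower quasi-density μ∗, defined by μ∗(X) := 1 − μ*(ℕ \ X), has the strong Darboux property: for all X ⊆ Y ⊆ ℕ and every a ∈ [μ∗(X), μ∗(Y)], there exists A with X ⊆ A ⊆ Y and μ∗(A) = a. -/

import Mathlib

/-!
Let `vdc n ∈ [0, 1)` be the van der Corput sequence and interpolate between `X` and `Y` by
`A t = X ∪ {n ∈ Y | vdc n < t}`, so that `A 0 = X` and `A 1 = Y`. The integers `n` with
`vdc n ∈ [t, t')` lie, for every `m`, in at most `(t' - t) 2^m + 2` residue classes modulo `2^m`,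
and (F4♭) bounds `μ*` by `2^(-m)` on each class; with (F3) this gives
`μ*(A t' \ A t) ≤ t' - t`. Hence `t ↦ μ_*(A t)` increases by at most `t' - t` from `t` to `t'`:
it can only jump downwards, and therefore takes every value between `μ_*(X)` and `μ_*(Y)`.
-/

/-- `k·X + h = {k*x + h : x ∈ X}` -/
def affImage (k h : ℕ) (X : Set ℕ) : Set ℕ := (fun x => k * x + h) '' X

theorem exists_eq_of_le_add_sub {f : ℝ → ℝ} {a b v : ℝ} (hab : a ≤ b)
    (hf : ∀ x y, a ≤ x → x ≤ y → y ≤ b → f y ≤ f x + (y - x))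
    (hva : f a ≤ v) (hvb : v ≤ f b) :
    ∃ c ∈ Set.Icc a b, f c = v := by
  set T := {x ∈ Set.Icc a b | v ≤ f x}
  have hbT : b ∈ T := ⟨⟨hab, le_rfl⟩, hvb⟩
  have hbdd : BddBelow T := ⟨a, fun x hx => hx.1.1⟩
  set c := sInf T
  have hac : a ≤ c := le_csInf ⟨b, hbT⟩ fun x hx => hx.1.1
  have hcb : c ≤ b := csInf_le hbdd hbT
  refine ⟨c, ⟨hac, hcb⟩, le_antisymm ?_ ?_⟩
  · rcases eq_or_lt_of_le hac with hac | hac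
    · rwa [← hac]
    refine le_of_forall_pos_lt_add fun ε hε => ?_
    set x := max a (c - ε)
    have hxc : x < c := max_lt hac (by linarith)
    have hfx : f x < v := by
      by_contra! h
      exact (csInf_le hbdd ⟨⟨le_max_left _ _, hxc.le.trans hcb⟩, h⟩).not_gt hxc
    have := hf x c (le_max_left _ _) hxc.le hcb
    have : c - ε ≤ x := le_max_right _ _
    linarith
  · refine le_of_forall_pos_lt_add fun ε hε => ?_
    obtain ⟨x, hxT, hxc⟩ := Real.lt_sInf_add_pos ⟨b, hbT⟩ hε
    have := hf c x hac (csInf_le hbdd hxT) hxT.1.2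
    linarith [hxT.2]

/-- Reflect the binary digits of `n` about the radix point: `vdc 0b110 = 0.011₂`. -/
noncomputable def vdc : ℕ → ℝ
  | 0 => 0
  | n + 1 => ((n + 1) % 2 : ℕ) / 2 + vdc ((n + 1) / 2) / 2

theorem vdc_eq (n : ℕ) : vdc n = (n % 2 : ℕ) / 2 + vdc (n / 2) / 2 := by
  cases n with
  | zero => simp [vdc]
  | succ n => rw [vdc]

theorem vdc_mem_Ico (n : ℕ) : vdc n ∈ Set.Ico 0 1 := by
  induction n using Nat.strong_induction_on with
  | _ n ih =>
    rcases n.eq_zero_or_pos with rfl | hn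
    · simp [vdc]
    · obtain ⟨h0, h1⟩ := ih (n / 2) (by omega)
      have : ((n % 2 : ℕ) : ℝ) ≤ 1 := by exact_mod_cast Nat.le_of_lt_succ (n.mod_lt two_pos)
      rw [vdc_eq]
      constructor <;> [positivity; linarith]

theorem floor_two_mul_vdc (n : ℕ) : ⌊2 * vdc n⌋₊ = n % 2 := by
  obtain ⟨h0, h1⟩ := vdc_mem_Ico (n / 2)
  rw [Nat.floor_eq_iff (by linarith [(vdc_mem_Ico n).1]), vdc_eq]
  constructor <;> linarith

theorem vdc_injective : Function.Injective vdc := by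
  intro a b hab
  induction hs : a + b using Nat.strong_induction_on generalizing a b with
  | _ s ih =>
    rcases Nat.eq_zero_or_pos s with rfl | hs0
    · omega
    have hmod : a % 2 = b % 2 := by rw [← floor_two_mul_vdc, hab, floor_two_mul_vdc]
    have hdiv : a / 2 = b / 2 := by
      refine ih _ (by omega) ?_ rfl
      have := vdc_eq a
      rw [hab, vdc_eq b, hmod] at this
      linarith
    omega

theorem vdc_eq_vdc_mod_add_vdc_div (m n : ℕ) :
    vdc n = vdc (n % 2 ^ m) + vdc (n / 2 ^ m) / 2 ^ m := by
  induction m generalizing n with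
  | zero => simp [Nat.mod_one, vdc]
  | succ m ih =>
    have hmod : n % 2 ^ (m + 1) % 2 = n % 2 := Nat.mod_mod_of_dvd n (dvd_pow_self 2 m.succ_ne_zero)
    have hdiv : n % 2 ^ (m + 1) / 2 = n / 2 % 2 ^ m := by
      rw [pow_succ', Nat.mod_mul_right_div_self]
    rw [vdc_eq n, vdc_eq (n % 2 ^ (m + 1)), hmod, hdiv, ih (n / 2), Nat.div_div_eq_div_mul,
      ← pow_succ']
    ring

theorem exists_natCast_eq_vdc_mul_two_pow {m j : ℕ} (hj : j < 2 ^ m) :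
    ∃ i : ℕ, (i : ℝ) = vdc j * 2 ^ m := by
  induction m generalizing j with
  | zero => simp_all [vdc]
  | succ m ih =>
    obtain ⟨i, hi⟩ := ih (j := j / 2) (by omega)
    refine ⟨j % 2 * 2 ^ m + i, ?_⟩
    rw [vdc_eq j]
    push_cast
    rw [hi]
    ring

theorem natCast_floor_vdc_mul_two_pow {m j : ℕ} (hj : j < 2 ^ m) :
    (⌊vdc j * 2 ^ m⌋₊ : ℝ) = vdc j * 2 ^ m := by
  obtain ⟨i, hi⟩ := exists_natCast_eq_vdc_mul_two_pow hj
  rw [← hi, Nat.floor_natCast]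

theorem card_filter_vdc_mem_Ioo_le (m : ℕ) {a b : ℝ} (hab : a ≤ b) :
    (((Finset.range (2 ^ m)).filter fun j => vdc j ∈ Set.Ioo a b).card : ℝ) ≤
      (b - a) * 2 ^ m + 1 := by
  have h2m : (0 : ℝ) < 2 ^ m := by positivity
  rcases lt_or_ge b 0 with hb | hb
  · rw [Finset.filter_false_of_mem fun j _ hj => (vdc_mem_Ico j).1.not_gt (hj.2.trans hb),
      Finset.card_empty, Nat.cast_zero]
    nlinarith
  have hmaps : Set.MapsTo (fun j => ⌊vdc j * 2 ^ m⌋₊)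
      ((Finset.range (2 ^ m)).filter fun j => vdc j ∈ Set.Ioo a b)
      (Finset.Ico ⌈a * 2 ^ m⌉₊ ⌈b * 2 ^ m⌉₊) := by
    intro j hj
    simp only [Finset.coe_filter, Finset.mem_range, Set.mem_Ioo, Set.mem_ofPred_eq] at hj
    obtain ⟨hj, ha, hb⟩ := hj
    simp only [Finset.coe_Ico, Set.mem_Ico, Nat.ceil_le, Nat.lt_ceil,
      natCast_floor_vdc_mul_two_pow hj]
    constructor <;> nlinarith
  have hinj : Set.InjOn (fun j => ⌊vdc j * 2 ^ m⌋₊)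
      ((Finset.range (2 ^ m)).filter fun j => vdc j ∈ Set.Ioo a b) := by
    intro j hj j' hj' he
    simp only [Finset.coe_filter, Finset.mem_range, Set.mem_ofPred_eq] at hj hj'
    have := congrArg (fun i : ℕ => (i : ℝ)) he
    simp only [natCast_floor_vdc_mul_two_pow hj.1, natCast_floor_vdc_mul_two_pow hj'.1] at this
    exact vdc_injective (mul_right_cancel₀ h2m.ne' this)
  calc _ ≤ ((Finset.Ico ⌈a * 2 ^ m⌉₊ ⌈b * 2 ^ m⌉₊).card : ℝ) := by
        exact_mod_cast Finset.card_le_card_of_injOn _ hmaps hinj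
    _ ≤ (b - a) * 2 ^ m + 1 := by
        rw [Nat.card_Ico]
        have hb' := Nat.ceil_lt_add_one (mul_nonneg hb h2m.le)
        have ha' := Nat.le_ceil (a * 2 ^ m)
        rcases le_total ⌈a * 2 ^ m⌉₊ ⌈b * 2 ^ m⌉₊ with h | h
        · rw [Nat.cast_sub h]; nlinarith
        · rw [Nat.sub_eq_zero_of_le h, Nat.cast_zero]; nlinarith

theorem vdc_mod_two_pow_mem_Ioc (m n : ℕ) :
    vdc (n % 2 ^ m) ∈ Set.Ioc (vdc n - 1 / 2 ^ m) (vdc n) := by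
  obtain ⟨h0, h1⟩ := vdc_mem_Ico (n / 2 ^ m)
  have h2m : (0 : ℝ) < 2 ^ m := by positivity
  rw [vdc_eq_vdc_mod_add_vdc_div m n, Set.mem_Ioc]
  constructor
  · have : vdc (n / 2 ^ m) / 2 ^ m < 1 / 2 ^ m := by gcongr
    linarith
  · have : 0 ≤ vdc (n / 2 ^ m) / 2 ^ m := by positivity
    linarith

theorem affImage_one_affImage (k h : ℕ) (X : Set ℕ) :
    affImage 1 k (affImage k h X) = affImage k (h + k) X := by
  simp only [affImage, Set.image_image]
  congr 1
  funext x
  ring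

theorem affImage_setOf_of_forall_mod_eq {k j : ℕ} {W : Set ℕ} (hW : ∀ n ∈ W, n % k = j) :
    affImage k j {v | k * v + j ∈ W} = W := by
  ext n
  refine ⟨fun ⟨v, hv, hvn⟩ => hvn ▸ hv, fun hn => ⟨n / k, ?_, ?_⟩⟩ <;>
    simp only [Set.mem_ofPred_eq, ← hW n hn, Nat.div_add_mod, hn]

def lowerQuasiDensity (μ : Set ℕ → ℝ) (X : Set ℕ) : ℝ := 1 - μ Xᶜ

def vdcInterpolant (X Y : Set ℕ) (t : ℝ) : Set ℕ := X ∪ (Y ∩ {n | vdc n < t})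

section

variable {X Y : Set ℕ}

theorem subset_vdcInterpolant (t : ℝ) : X ⊆ vdcInterpolant X Y t := Set.subset_union_left

theorem vdcInterpolant_subset (hXY : X ⊆ Y) (t : ℝ) : vdcInterpolant X Y t ⊆ Y :=
  Set.union_subset hXY Set.inter_subset_left

theorem vdcInterpolant_zero : vdcInterpolant X Y 0 = X := by
  have : ∀ n, ¬vdc n < 0 := fun n => not_lt.mpr (vdc_mem_Ico n).1
  simp [vdcInterpolant, this]

theorem vdcInterpolant_one (hXY : X ⊆ Y) : vdcInterpolant X Y 1 = Y := by
  simp [vdcInterpolant, (vdc_mem_Ico _).2, hXY]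

theorem vdcInterpolant_mono {t t' : ℝ} (h : t ≤ t') :
    vdcInterpolant X Y t ⊆ vdcInterpolant X Y t' :=
  Set.union_subset_union_right _ (Set.inter_subset_inter_right _ fun _ hn => lt_of_lt_of_le hn h)

theorem vdc_mem_Ico_of_mem_vdcInterpolant_diff {t t' : ℝ} {n : ℕ}
    (hn : n ∈ vdcInterpolant X Y t' \ vdcInterpolant X Y t) : vdc n ∈ Set.Ico t t' := by
  simp only [vdcInterpolant, Set.mem_sdiff, Set.mem_union, Set.mem_inter_iff,
    Set.mem_ofPred_eq] at hn
  rcases hn with ⟨hX | ⟨hY, ht'⟩, hn⟩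
  · exact absurd (Or.inl hX) hn
  · exact ⟨not_lt.mp fun ht => hn (Or.inr ⟨hY, ht⟩), ht'⟩

end

section UpperQuasiDensity

variable {μ : Set ℕ → ℝ} (hle : ∀ X, μ X ≤ 1) (hsub : ∀ X Y, μ (X ∪ Y) ≤ μ X + μ Y)
  (haff : ∀ (X : Set ℕ) (h k : ℕ), 0 < h → 0 < k →
    μ (affImage k h X) = (1 / (k : ℝ)) * μ X)

include hsub in
theorem lowerQuasiDensity_le_add_diff {Z Z' : Set ℕ} (h : Z ⊆ Z') :
    lowerQuasiDensity μ Z' ≤ lowerQuasiDensity μ Z + μ (Z' \ Z) := by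
  have hcompl : Zᶜ = Z'ᶜ ∪ (Z' \ Z) := by
    ext n
    have := @h n
    simp only [Set.mem_compl_iff, Set.mem_union, Set.mem_sdiff]
    tauto
  have := hsub Z'ᶜ (Z' \ Z)
  rw [← hcompl] at this
  unfold lowerQuasiDensity
  linarith

include haff

theorem quasiDensity_empty : μ ∅ = 0 := by
  have := haff ∅ 1 2 one_pos two_pos
  simp only [affImage, Set.image_empty] at this
  linarith

/-- (F4♭) assumes `h > 0`; the case `h = 0` follows after translating by `k`. -/
theorem quasiDensity_affImage (X : Set ℕ) (h : ℕ) {k : ℕ} (hk : 0 < k) :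
    μ (affImage k h X) = μ X / k := by
  calc μ (affImage k h X) = μ (affImage 1 k (affImage k h X)) := by
        rw [haff _ k 1 hk one_pos, Nat.cast_one, div_one, one_mul]
    _ = μ X / k := by
        rw [affImage_one_affImage, haff _ _ _ (by omega) hk, one_div_mul_eq_div]

include hle in
theorem quasiDensity_le_of_forall_mod_eq {k j : ℕ} (hk : 0 < k) {W : Set ℕ}
    (hW : ∀ n ∈ W, n % k = j) : μ W ≤ 1 / k := by
  rw [← affImage_setOf_of_forall_mod_eq hW, quasiDensity_affImage haff _ _ hk]
  gcongr
  exact hle _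

include hle hsub in
theorem quasiDensity_le_add_of_forall_vdc_mem_Ico (m : ℕ) {t t' : ℝ} (htt' : t ≤ t')
    {W : Set ℕ} (hW : ∀ n ∈ W, vdc n ∈ Set.Ico t t') : μ W ≤ t' - t + 2 / 2 ^ m := by
  have h2m : (0 : ℝ) < 2 ^ m := by positivity
  set J := (Finset.range (2 ^ m)).filter fun j => vdc j ∈ Set.Ioo (t - 1 / 2 ^ m) t'
  have hW_eq : W = ⋃ j ∈ Finset.range (2 ^ m), W ∩ {n | n % 2 ^ m = j} := by
    ext n
    simp only [Set.mem_iUnion, Finset.mem_range, Set.mem_inter_iff, Set.mem_ofPred_eq]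
    exact ⟨fun hn => ⟨_, Nat.mod_lt n (by positivity), hn, rfl⟩,
      fun ⟨_, _, hn, _⟩ => hn⟩
  have hclass : ∀ j ∈ Finset.range (2 ^ m),
      μ (W ∩ {n | n % 2 ^ m = j}) ≤ if j ∈ J then 1 / 2 ^ m else 0 := by
    intro j _
    split_ifs with hj
    · exact_mod_cast quasiDensity_le_of_forall_mod_eq hle haff (by positivity)
        (W := W ∩ {n | n % 2 ^ m = j}) fun n hn => hn.2
    · suffices W ∩ {n | n % 2 ^ m = j} = ∅ by rw [this, quasiDensity_empty haff]
      refine Set.eq_empty_of_forall_notMem fun n hn => hj ?_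
      obtain ⟨hn, hnj⟩ := hn
      obtain ⟨hlo, hhi⟩ := vdc_mod_two_pow_mem_Ioc m n
      obtain ⟨htn, hnt'⟩ := hW n hn
      rw [Set.mem_ofPred_eq.mp hnj] at hlo hhi
      simp only [J, Finset.mem_filter, Finset.mem_range, Set.mem_Ioo]
      exact ⟨hnj ▸ Nat.mod_lt n (by positivity), by linarith, by linarith⟩
  have hcard := card_filter_vdc_mem_Ioo_le m (a := t - 1 / 2 ^ m) (b := t') (by
    have : (0 : ℝ) ≤ 1 / 2 ^ m := by positivity
    linarith)
  calc μ W ≤ ∑ j ∈ Finset.range (2 ^ m), μ (W ∩ {n | n % 2 ^ m = j}) := by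
        conv_lhs => rw [hW_eq]
        exact Finset.apply_union_le_sum (quasiDensity_empty haff) (hsub _ _) _
    _ ≤ ∑ j ∈ Finset.range (2 ^ m), if j ∈ J then 1 / 2 ^ m else 0 :=
        Finset.sum_le_sum hclass
    _ = J.card / 2 ^ m := by
        rw [Finset.sum_ite_mem, Finset.inter_eq_right.mpr (Finset.filter_subset _ _),
          Finset.sum_const, nsmul_eq_mul, mul_one_div]
    _ ≤ ((t' - (t - 1 / 2 ^ m)) * 2 ^ m + 1) / 2 ^ m := by gcongr
    _ = t' - t + 2 / 2 ^ m := by field_simp; ring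

include hle hsub in
theorem quasiDensity_le_of_forall_vdc_mem_Ico {t t' : ℝ} (htt' : t ≤ t')
    {W : Set ℕ} (hW : ∀ n ∈ W, vdc n ∈ Set.Ico t t') : μ W ≤ t' - t := by
  have hlim : Filter.Tendsto (fun m : ℕ => t' - t + 2 / 2 ^ m) Filter.atTop (nhds (t' - t)) := by
    simpa [div_eq_mul_inv] using ((tendsto_pow_atTop_nhds_zero_of_lt_one (r := (1 / 2 : ℝ))
      (by norm_num) (by norm_num)).const_mul 2).const_add (t' - t)
  exact ge_of_tendsto' hlim fun m =>
    quasiDensity_le_add_of_forall_vdc_mem_Ico hle hsub haff m htt' hW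

include hle hsub in
theorem lowerQuasiDensity_vdcInterpolant_le {X Y : Set ℕ} {t t' : ℝ} (htt' : t ≤ t') :
    lowerQuasiDensity μ (vdcInterpolant X Y t') ≤
      lowerQuasiDensity μ (vdcInterpolant X Y t) + (t' - t) :=
  (lowerQuasiDensity_le_add_diff hsub (vdcInterpolant_mono htt')).trans <| add_le_add_right
    (quasiDensity_le_of_forall_vdc_mem_Ico hle hsub haff htt' fun _ =>
      vdc_mem_Ico_of_mem_vdcInterpolant_diff) _

end UpperQuasiDensity

theorem stmt14_general (μ : Set ℕ → ℝ)
    (h2 : ∀ X : Set ℕ, μ X ≤ 1)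
    (h3 : ∀ X Y : Set ℕ, μ (X ∪ Y) ≤ μ X + μ Y)
    (h4 : ∀ (X : Set ℕ) (h k : ℕ), 0 < h → 0 < k →
      μ (affImage k h X) = (1 / (k : ℝ)) * μ X) :
    ∀ X Y : Set ℕ, X ⊆ Y → ∀ a : ℝ,
      (1 - μ Xᶜ) ≤ a → a ≤ (1 - μ Yᶜ) →
      ∃ A : Set ℕ, X ⊆ A ∧ A ⊆ Y ∧ 1 - μ Aᶜ = a := by
  intro X Y hXY a hXa haY
  obtain ⟨c, -, hc⟩ := exists_eq_of_le_add_sub (v := a) zero_le_one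
    (fun t t' _ htt' _ => lowerQuasiDensity_vdcInterpolant_le h2 h3 h4 (X := X) (Y := Y) htt')
    (by rw [vdcInterpolant_zero]; exact hXa) (by rw [vdcInterpolant_one hXY]; exact haY)
  exact ⟨vdcInterpolant X Y c, subset_vdcInterpolant c, vdcInterpolant_subset hXY c, hc⟩

theorem stmt14 (μ : Set ℕ → ℝ)
    (h1 : μ Set.univ = 1)
    (h2 : ∀ X : Set ℕ, μ X ≤ 1)
    (h3 : ∀ X Y : Set ℕ, μ (X ∪ Y) ≤ μ X + μ Y)
    (h4 : ∀ (X : Set ℕ) (h k : ℕ), 0 < h → 0 < k →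
      μ (affImage k h X) = (1 / (k : ℝ)) * μ X) :
    ∀ X Y : Set ℕ, X ⊆ Y → ∀ a : ℝ,
      (1 - μ Xᶜ) ≤ a → a ≤ (1 - μ Yᶜ) →
      ∃ A : Set ℕ, X ⊆ A ∧ A ⊆ Y ∧ 1 - μ Aᶜ = a :=
  stmt14_general μ h2 h3 h4
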